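/- arXiv:1302.1156 — 7 statements merged into one kernel-verified Lean document; each statement's English description precedes it below -/
import Mathlib

section
/- Let w, x ∈ ℝ^n with w ≠ 0, let α > 0 and η > 0 with 2αη < 1, set y = x · w and w' = w − α y (x − y w / ‖w‖₂²), and let Γ : ℝ^n → ℝ^n satisfy ‖Γ(w)‖₂ ≤ ‖w‖₂. Then the updated vector w' − α η Γ(w) is nonzero; in fact ‖w' − α η Γ(w)‖₂ ≥ (1 − αη) ‖w‖₂ > 0. Hence one full step of the learning rule never produces the all-zero weight vector from a nonzero weight vector. -/
open RealInnerProductSpace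

/-- A full step of the learning rule avoids the all-zero solution: if
`2αη < 1`, `y = x ⬝ w`, `w' = w - α y (x - y w/‖w‖²)` and `‖Γ(w)‖ ≤ ‖w‖`,
then `‖w' - αη Γ(w)‖ ≥ (1 - αη)‖w‖ > 0`, so the updated vector is nonzero. -/
theorem learning_step_avoids_zero
    {n : ℕ} (w x : EuclideanSpace ℝ (Fin n)) (hw : w ≠ 0) (α η : ℝ)
    (hα : 0 < α) (hη : 0 < η) (hαη : 2 * α * η < 1) (y : ℝ)
    (hy : y = ⟪x, w⟫) (w' : EuclideanSpace ℝ (Fin n))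
    (hw' : w' = w - (α * y) • (x - (y / ‖w‖ ^ 2) • w))
    (Γ : EuclideanSpace ℝ (Fin n) → EuclideanSpace ℝ (Fin n))
    (hΓ : ‖Γ w‖ ≤ ‖w‖) :
    w' - (α * η) • Γ w ≠ 0
      ∧ (1 - α * η) * ‖w‖ ≤ ‖w' - (α * η) • Γ w‖
      ∧ 0 < (1 - α * η) * ‖w‖ := by
  have hwpos : 0 < ‖w‖ := norm_pos_iff.mpr hw
  have hinner : ⟪w', w⟫ = ‖w‖ ^ 2 := by
    subst hw'
    rw [inner_sub_left, inner_smul_left, inner_sub_left, inner_smul_left,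
      real_inner_self_eq_norm_sq, ← hy]
    have : ‖w‖ ^ 2 ≠ 0 := by positivity
    simp only [conj_trivial]
    field_simp
    ring
  have hnorm : ‖w‖ ≤ ‖w'‖ := by
    have h := real_inner_le_norm w' w
    rw [hinner] at h
    nlinarith
  have hαη1 : α * η < 1 := by nlinarith
  have hle : (1 - α * η) * ‖w‖ ≤ ‖w' - (α * η) • Γ w‖ := by
    have h1 : ‖w'‖ - ‖(α * η) • Γ w‖ ≤ ‖w' - (α * η) • Γ w‖ := norm_sub_norm_le _ _
    have h2 : ‖(α * η) • Γ w‖ = (α * η) * ‖Γ w‖ := by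
      rw [norm_smul, Real.norm_eq_abs, abs_of_pos (by positivity)]
    nlinarith [mul_le_mul_of_nonneg_left hΓ (by positivity : (0:ℝ) ≤ α * η)]
  have hpos : 0 < (1 - α * η) * ‖w‖ := by nlinarith
  exact ⟨fun h => by simp [h] at hle; nlinarith, hle, hpos⟩
end

section
/- Let k, n, d*, γ, υ, Q be positive integers with γ ≥ 2, υ ≥ 2, k ≤ n, and Q − 1 ≥ d* (γ − 1)(υ − 1). Let G be a k × n integer matrix whose entries lie in {0, 1, …, γ − 1}, whose rank over ℚ equals k, and each of whose columns has at most d* nonzero entries. Then the set X = { uᵀ G : u ∈ {0, 1, …, υ − 1}^k } consists of exactly υ^k distinct vectors in ℤ^n, every entry of every vector in X lies in {0, 1, …, Q − 1}, and the ℚ-linear span of X has dimension exactly k. In particular, taking k = ⌈rn⌉ for 0 < r < 1, there exists a set of C = υ^{rn} patterns of length n with non-negative integer entries between 0 and Q − 1 that lie in a k-dimensional subspace of ℚ^n. -/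
/-- Exponential pattern retrieval capacity: if `G` is a `k × n` integer
matrix with entries in `{0,…,γ-1}`, rank `k` over `ℚ`, and at most `d*`
nonzero entries per column, and `Q - 1 ≥ d*(γ-1)(υ-1)`, then the set
`X = {uᵀG : u ∈ {0,…,υ-1}^k}` consists of exactly `υ^k` distinct vectors,
all of whose entries lie in `{0,…,Q-1}`, and the `ℚ`-span of `X` has
dimension exactly `k`. -/
theorem exponential_pattern_capacity
    (k n dstar γ υ Q : ℕ) (hk : 0 < k) (hn : 0 < n) (hdstar : 0 < dstar)
    (hγ : 2 ≤ γ) (hυ : 2 ≤ υ) (hQ : 0 < Q) (hkn : k ≤ n)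
    (hcap : dstar * (γ - 1) * (υ - 1) ≤ Q - 1)
    (G : Matrix (Fin k) (Fin n) ℤ)
    (hGent : ∀ i j, 0 ≤ G i j ∧ G i j ≤ (γ : ℤ) - 1)
    (hGrank : (G.map (Int.cast : ℤ → ℚ)).rank = k)
    (hGcol : ∀ j : Fin n,
      (Finset.univ.filter fun i : Fin k => G i j ≠ 0).card ≤ dstar) :
    (({ v | ∃ u : Fin k → ℤ, (∀ i, 0 ≤ u i ∧ u i ≤ (υ : ℤ) - 1) ∧
        v = Matrix.vecMul u G } : Set (Fin n → ℤ)).ncard = υ ^ k)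
    ∧ (∀ v ∈ ({ v | ∃ u : Fin k → ℤ, (∀ i, 0 ≤ u i ∧ u i ≤ (υ : ℤ) - 1) ∧
        v = Matrix.vecMul u G } : Set (Fin n → ℤ)),
        ∀ j : Fin n, 0 ≤ v j ∧ v j ≤ (Q : ℤ) - 1)
    ∧ Module.finrank ℚ (Submodule.span ℚ
        ((fun v : Fin n → ℤ => fun j : Fin n => (v j : ℚ)) ''
          { v | ∃ u : Fin k → ℤ, (∀ i, 0 ≤ u i ∧ u i ≤ (υ : ℤ) - 1) ∧
            v = Matrix.vecMul u G })) = k := by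
  classical
  set A : Matrix (Fin k) (Fin n) ℚ := G.map (Int.cast : ℤ → ℚ) with hA
  -- cast lemma
  have hcast : ∀ (u : Fin k → ℤ) (j : Fin n),
      ((Matrix.vecMul u G j : ℤ) : ℚ) = Matrix.vecMul (fun i => (u i : ℚ)) A j := by
    intro u j
    simp [Matrix.vecMul, dotProduct, hA, Matrix.map_apply]
  -- injectivity of vecMul over ℚ
  have hrange : LinearMap.range A.vecMulLinear = Submodule.span ℚ (Set.range A) :=
    range_vecMulLinear A
  have hfr : Module.finrank ℚ (LinearMap.range A.vecMulLinear) = k := by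
    rw [hrange, show Set.range A = Set.range A.row from rfl, ← Matrix.rank_eq_finrank_span_row, hGrank]
  have hker : LinearMap.ker A.vecMulLinear = ⊥ := by
    have h1 := LinearMap.finrank_range_add_finrank_ker A.vecMulLinear
    rw [hfr] at h1
    have h2 : Module.finrank ℚ (Fin k → ℚ) = k := by simp
    rw [h2] at h1
    have : Module.finrank ℚ (LinearMap.ker A.vecMulLinear) = 0 := by omega
    exact Submodule.finrank_eq_zero.mp this
  have hinjQ : Function.Injective (fun u : Fin k → ℚ => Matrix.vecMul u A) := by
    have := LinearMap.ker_eq_bot.mp hker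
    exact this
  have hinj : Function.Injective (fun u : Fin k → ℤ => Matrix.vecMul u G) := by
    intro u u' h
    have hq : (fun i => (u i : ℚ)) = fun i => (u' i : ℚ) := by
      apply hinjQ
      funext j
      show Matrix.vecMul (fun i => ((u i : ℤ):ℚ)) A j = Matrix.vecMul (fun i => ((u' i : ℤ):ℚ)) A j
      rw [← hcast u j, ← hcast u' j]
      exact congrArg (fun w => ((w j : ℤ):ℚ)) h
    funext i
    exact_mod_cast congrFun hq i
  refine ⟨?_, ?_, ?_⟩
  · -- cardinality
    set B : Finset (Fin k → ℤ) := Fintype.piFinset fun _ => Finset.Icc (0:ℤ) ((υ:ℤ)-1) with hB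
    have hset : ({ v | ∃ u : Fin k → ℤ, (∀ i, 0 ≤ u i ∧ u i ≤ (υ : ℤ) - 1) ∧
        v = Matrix.vecMul u G } : Set (Fin n → ℤ)) =
        ↑(B.image (fun u => Matrix.vecMul u G)) := by
      ext v
      simp only [Set.mem_setOf_eq, Finset.coe_image, Set.mem_image, Finset.mem_coe, hB,
        Fintype.mem_piFinset, Finset.mem_Icc]
      constructor
      · rintro ⟨u, hu, rfl⟩; exact ⟨u, hu, rfl⟩
      · rintro ⟨u, hu, rfl⟩; exact ⟨u, hu, rfl⟩
    rw [hset, Set.ncard_coe_finset, Finset.card_image_of_injective _ hinj]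
    simp [hB, Int.card_Icc]
  · -- entry bounds
    rintro v ⟨u, hu, rfl⟩ j
    have hterm : ∀ i : Fin k, 0 ≤ u i * G i j := fun i =>
      mul_nonneg (hu i).1 (hGent i j).1
    constructor
    · simpa [Matrix.vecMul, dotProduct] using
        Finset.sum_nonneg fun i _ => hterm i
    · have hb : Matrix.vecMul u G j = ∑ i, u i * G i j := by
        simp [Matrix.vecMul, dotProduct]
      rw [hb]
      have hsum : ∑ i, u i * G i j =
          ∑ i ∈ Finset.univ.filter (fun i : Fin k => G i j ≠ 0), u i * G i j := by
        rw [Finset.sum_filter_of_ne]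
        intro i _ h hGz
        exact h (by rw [hGz, mul_zero])
      rw [hsum]
      have hbound : ∀ i ∈ Finset.univ.filter (fun i : Fin k => G i j ≠ 0),
          u i * G i j ≤ ((υ:ℤ)-1) * ((γ:ℤ)-1) := by
        intro i _
        exact mul_le_mul (hu i).2 (hGent i j).2 (hGent i j).1
          (by have := hυ; omega)
      calc ∑ i ∈ Finset.univ.filter (fun i : Fin k => G i j ≠ 0), u i * G i j
          ≤ (Finset.univ.filter (fun i : Fin k => G i j ≠ 0)).card • (((υ:ℤ)-1) * ((γ:ℤ)-1)) :=
            Finset.sum_le_card_nsmul _ _ _ hbound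
        _ ≤ (dstar : ℤ) * (((υ:ℤ)-1) * ((γ:ℤ)-1)) := by
            rw [nsmul_eq_mul]
            apply mul_le_mul_of_nonneg_right
            · exact_mod_cast hGcol j
            · have h1 : (1:ℤ) ≤ υ := by exact_mod_cast Nat.one_le_of_lt hυ
              have h2 : (1:ℤ) ≤ γ := by exact_mod_cast Nat.one_le_of_lt hγ
              nlinarith
        _ ≤ (Q:ℤ) - 1 := by
            have hγ1 : (1:ℕ) ≤ γ := by omega
            have hυ1 : (1:ℕ) ≤ υ := by omega
            have hQ1 : (1:ℕ) ≤ Q := hQ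
            have hc : ((dstar * (γ - 1) * (υ - 1) : ℕ) : ℤ) ≤ ((Q - 1 : ℕ) : ℤ) := by
              exact_mod_cast hcap
            push_cast [Nat.cast_sub hγ1, Nat.cast_sub hυ1, Nat.cast_sub hQ1] at hc
            linarith [hc, sq_nonneg ((dstar:ℤ))]
            
  · -- finrank
    have hspan : Submodule.span ℚ
        ((fun v : Fin n → ℤ => fun j : Fin n => (v j : ℚ)) ''
          { v | ∃ u : Fin k → ℤ, (∀ i, 0 ≤ u i ∧ u i ≤ (υ : ℤ) - 1) ∧
            v = Matrix.vecMul u G }) = Submodule.span ℚ (Set.range A) := by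
      apply le_antisymm
      · rw [Submodule.span_le]
        rintro w ⟨v, ⟨u, hu, rfl⟩, rfl⟩
        show (fun j : Fin n => ((Matrix.vecMul u G j : ℤ) : ℚ)) ∈ _
        have : (fun j : Fin n => ((Matrix.vecMul u G j : ℤ) : ℚ)) =
            Matrix.vecMul (fun i => (u i : ℚ)) A := by
          funext j; exact hcast u j
        rw [this, ← hrange]
        exact ⟨fun i => (u i : ℚ), by simp [Matrix.vecMulLinear]⟩
      · rw [Submodule.span_le]
        rintro w ⟨i, rfl⟩
        apply Submodule.subset_span
        refine ⟨Matrix.vecMul (Pi.single i 1) G, ⟨Pi.single i (1:ℤ), ?_, rfl⟩, ?_⟩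
        · intro l
          rcases eq_or_ne l i with rfl | hl
          · simp; omega
          · simp [Pi.single_apply, hl]; omega
        · funext j
          show ((Matrix.vecMul (Pi.single i (1:ℤ)) G j : ℤ) : ℚ) = A i j
          rw [hcast]
          have : (fun l : Fin k => (((Pi.single i 1 : Fin k → ℤ) l : ℤ) : ℚ)) = Pi.single i (1:ℚ) := by
            funext l
            rcases eq_or_ne l i with rfl | hl
            · simp
            · simp [Pi.single_apply, hl]
          rw [this, Matrix.single_one_vecMul]
          rfl
          
    rw [hspan, show Set.range A = Set.range A.row from rfl, ← Matrix.rank_eq_finrank_span_row, hGrank]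
end

section
/- Consider a bipartite graph between n pattern nodes and m constraint nodes given by a neighborhood map N assigning to each pattern node v a set N(v) of constraint nodes with |N(v)| = d_p. Let P be a finite set of pattern nodes, let N(P) = ⋃_{v ∈ P} N(v), and let N_unique(P) be the set of constraint nodes that belong to N(v) for exactly one v ∈ P. If |N(P)| > β d_p |P| for some real β, then |N_unique(P)| > 2 d_p |P| (β − 1/2). -/
/-- Unique-neighbor count: in a `d_p`-left-regular bipartite graph, if a set
`P` of pattern nodes satisfies `|N(P)| > β d_p |P|`, then the number of
constraint nodes adjacent to exactly one element of `P` exceeds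
`2 d_p |P| (β - 1/2)`. -/
theorem unique_neighbor_bound
    {n m : ℕ} (N : Fin n → Finset (Fin m)) (dp : ℕ)
    (hreg : ∀ v, (N v).card = dp) (β : ℝ) (P : Finset (Fin n))
    (hexp : β * (dp : ℝ) * (P.card : ℝ) < ((P.biUnion N).card : ℝ)) :
    2 * (dp : ℝ) * (P.card : ℝ) * (β - 1 / 2) <
      ((Finset.univ.filter fun c : Fin m =>
        (P.filter fun v => c ∈ N v).card = 1).card : ℝ) := by
  classical
  set B := P.biUnion N with hB
  set deg : Fin m → ℕ := fun c => (P.filter fun v => c ∈ N v).card with hdeg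
  -- total degree sum
  have hsum : ∑ c ∈ B, deg c = dp * P.card := by
    have : ∑ c ∈ B, deg c = ∑ v ∈ P, (B.filter fun c => c ∈ N v).card := by
      simp only [hdeg, Finset.card_filter]
      exact Finset.sum_comm
    rw [this]
    have hfix : ∀ v ∈ P, (B.filter fun c => c ∈ N v).card = dp := by
      intro v hv
      have hsub : N v ⊆ B := fun c hc => Finset.mem_biUnion.2 ⟨v, hv, hc⟩
      have : (B.filter fun c => c ∈ N v) = N v := by
        ext c
        simp only [Finset.mem_filter]
        exact ⟨fun h => h.2, fun h => ⟨hsub h, h⟩⟩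
      rw [this, hreg]
    rw [Finset.sum_congr rfl hfix, Finset.sum_const, smul_eq_mul, mul_comm]
  set U := B.filter (fun c => deg c = 1) with hU
  set S := B.filter (fun c => ¬ deg c = 1) with hS
  have hcard : U.card + S.card = B.card := Finset.card_filter_add_card_filter_not _
  -- lower bound degree sum
  have hsum_ge : U.card + 2 * S.card ≤ ∑ c ∈ B, deg c := by
    have hsplit : ∑ c ∈ B, deg c = ∑ c ∈ U, deg c + ∑ c ∈ S, deg c := by
      rw [hU, hS, Finset.sum_filter_add_sum_filter_not]
    rw [hsplit]
    have h1 : ∑ c ∈ U, deg c = U.card := by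
      rw [Finset.sum_congr rfl (fun c hc => (Finset.mem_filter.1 hc).2), Finset.sum_const,
        smul_eq_mul, mul_one]
    have h2 : 2 * S.card ≤ ∑ c ∈ S, deg c := by
      rw [mul_comm]
      refine Finset.card_nsmul_le_sum S deg 2 ?_
      intro c hc
      obtain ⟨hcB, hne⟩ := Finset.mem_filter.1 hc
      have hpos : 0 < deg c := by
        obtain ⟨v, hv, hcv⟩ := Finset.mem_biUnion.1 hcB
        exact Finset.card_pos.2 ⟨v, Finset.mem_filter.2 ⟨hv, hcv⟩⟩
      omega
    omega
  have hkey : 2 * B.card ≤ dp * P.card + U.card := by omega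
  -- the target set contains U
  have hUsub : U ⊆ Finset.univ.filter fun c : Fin m =>
      (P.filter fun v => c ∈ N v).card = 1 := by
    intro c hc
    exact Finset.mem_filter.2 ⟨Finset.mem_univ _, (Finset.mem_filter.1 hc).2⟩
  have hUle : (U.card : ℝ) ≤
      ((Finset.univ.filter fun c : Fin m =>
        (P.filter fun v => c ∈ N v).card = 1).card : ℝ) := by
    exact_mod_cast Finset.card_le_card hUsub
  have hkeyR : 2 * (B.card : ℝ) ≤ (dp : ℝ) * P.card + U.card := by
    exact_mod_cast hkey
  nlinarith [hexp, hUle, hkeyR]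
end

section
/- Let W be an m × n real matrix each of whose columns has exactly d_p nonzero entries, and associate to W the bipartite graph in which pattern node j is adjacent to constraint node i if and only if W_{ij} ≠ 0. Suppose this graph is an (αn, βd_p)-expander with β > 1/2 + 1/(4 d_p). Then for every nonzero integer vector c ∈ ℤ^n with at most αn nonzero entries, W c ≠ 0. Consequently, any two distinct integer-valued vectors x, y ∈ ℤ^n satisfying W x = 0 and W y = 0 differ in more than αn coordinates, i.e., their Hamming distance is at least ⌊αn⌋ + 1. -/
/-- Minimum distance of memorized patterns: if the bipartite graph of the
`d_p`-column-regular matrix `W` is an `(αn, βd_p)`-expander with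
`β > 1/2 + 1/(4 d_p)`, then `W c ≠ 0` for every nonzero integer vector `c`
with at most `αn` nonzero entries; consequently any two distinct integer
solutions of `W x = 0` are at Hamming distance more than `αn`,
i.e. at least `⌊αn⌋ + 1`. -/
theorem expander_minimum_distance
    {m n : ℕ} (W : Matrix (Fin m) (Fin n) ℝ) (dp : ℕ) (α β : ℝ)
    (hcol : ∀ j : Fin n,
      (Finset.univ.filter fun i : Fin m => W i j ≠ 0).card = dp)
    (hexp : ∀ P : Finset (Fin n), P.Nonempty → (P.card : ℝ) ≤ α * n →
      β * (dp : ℝ) * (P.card : ℝ) <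
        ((P.biUnion fun j => Finset.univ.filter fun i : Fin m => W i j ≠ 0).card : ℝ))
    (hβ : 1 / 2 + 1 / (4 * (dp : ℝ)) < β) :
    (∀ c : Fin n → ℤ, c ≠ 0 →
      ((Finset.univ.filter fun j : Fin n => c j ≠ 0).card : ℝ) ≤ α * n →
      W.mulVec (fun j => (c j : ℝ)) ≠ 0)
    ∧ (∀ x y : Fin n → ℤ, x ≠ y →
        W.mulVec (fun j => (x j : ℝ)) = 0 → W.mulVec (fun j => (y j : ℝ)) = 0 →
        α * n < (hammingDist x y : ℝ) ∧
          ⌊α * (n : ℝ)⌋ + 1 ≤ (hammingDist x y : ℤ)) := by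
  have hβhalf : (1 : ℝ) / 2 ≤ β := by
    refine le_of_lt (lt_of_le_of_lt ?_ hβ)
    have : (0:ℝ) ≤ 1 / (4 * (dp : ℝ)) := by positivity
    linarith
  have key : ∀ c : Fin n → ℤ, c ≠ 0 →
      ((Finset.univ.filter fun j : Fin n => c j ≠ 0).card : ℝ) ≤ α * n →
      W.mulVec (fun j => (c j : ℝ)) ≠ 0 := by
    intro c hc hcard hWc
    set S := Finset.univ.filter fun j : Fin n => c j ≠ 0 with hS
    have hSne : S.Nonempty := by
      obtain ⟨j, hj⟩ := Function.ne_iff.mp hc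
      exact ⟨j, by simp only [hS, Finset.mem_filter, Finset.mem_univ, true_and]; simpa using hj⟩
    set N := S.biUnion (fun j => Finset.univ.filter fun i : Fin m => W i j ≠ 0) with hN
    have hexpS := hexp S hSne hcard
    have hsum : ∑ i ∈ N, (S.filter fun j => W i j ≠ 0).card = S.card * dp := by
      have h1 : ∀ i, (S.filter fun j => W i j ≠ 0).card
          = ∑ j ∈ S, if W i j ≠ 0 then 1 else 0 := by
        intro i; rw [Finset.card_filter]
      have h2 : ∀ j ∈ S, (N.filter fun i => W i j ≠ 0) =
          Finset.univ.filter fun i : Fin m => W i j ≠ 0 := by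
        intro j hj
        ext i
        simp only [Finset.mem_filter, Finset.mem_univ, true_and, and_iff_right_iff_imp]
        intro hW
        exact Finset.mem_biUnion.mpr ⟨j, hj, by simp [hW]⟩
      calc ∑ i ∈ N, (S.filter fun j => W i j ≠ 0).card
          = ∑ i ∈ N, ∑ j ∈ S, if W i j ≠ 0 then 1 else 0 := by
            simp_rw [h1]
        _ = ∑ j ∈ S, ∑ i ∈ N, if W i j ≠ 0 then 1 else 0 := Finset.sum_comm
        _ = ∑ j ∈ S, (N.filter fun i => W i j ≠ 0).card := by
            simp_rw [Finset.card_filter]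
        _ = ∑ j ∈ S, dp := by
            refine Finset.sum_congr rfl fun j hj => ?_
            rw [h2 j hj, hcol j]
        _ = S.card * dp := by rw [Finset.sum_const, smul_eq_mul]
    have hone : ∃ i ∈ N, (S.filter fun j => W i j ≠ 0).card = 1 := by
      by_contra h
      push_neg at h
      have h2 : ∀ i ∈ N, 2 ≤ (S.filter fun j => W i j ≠ 0).card := by
        intro i hi
        obtain ⟨j, hjS, hj⟩ := Finset.mem_biUnion.mp hi
        have hpos : 0 < (S.filter fun j => W i j ≠ 0).card := by
          refine Finset.card_pos.mpr ⟨j, Finset.mem_filter.mpr ⟨hjS, ?_⟩⟩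
          simpa using hj
        have := h i hi
        omega
      have hle : 2 * N.card ≤ S.card * dp := by
        rw [← hsum]
        calc 2 * N.card = ∑ _i ∈ N, 2 := by rw [Finset.sum_const, smul_eq_mul, mul_comm]
          _ ≤ ∑ i ∈ N, (S.filter fun j => W i j ≠ 0).card := Finset.sum_le_sum h2
      have hleR : (2 : ℝ) * N.card ≤ (S.card : ℝ) * dp := by exact_mod_cast hle
      have hnn : (0:ℝ) ≤ (dp : ℝ) * S.card := by positivity
      nlinarith [hexpS, hleR, hβhalf, hnn]
    obtain ⟨i, hiN, hcard1⟩ := hone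
    obtain ⟨j₀, hj₀⟩ := Finset.card_eq_one.mp hcard1
    have hj₀mem : j₀ ∈ S.filter fun j => W i j ≠ 0 := by rw [hj₀]; exact Finset.mem_singleton_self j₀
    have hWij₀ : W i j₀ ≠ 0 := (Finset.mem_filter.mp hj₀mem).2
    have hcj₀ : c j₀ ≠ 0 := by
      have := (Finset.mem_filter.mp (Finset.mem_filter.mp hj₀mem).1).2
      exact this
    have hzero := congrFun hWc i
    have hsum0 : ∑ j, W i j * (c j : ℝ) = 0 := by
      simpa [Matrix.mulVec, dotProduct] using hzero
    have hsingle : ∑ j, W i j * (c j : ℝ) = W i j₀ * (c j₀ : ℝ) := by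
      refine Finset.sum_eq_single j₀ (fun b _ hb => ?_) (by simp)
      by_cases hcb : c b = 0
      · simp [hcb]
      · have hbS : b ∈ S := by simp [hS, hcb]
        by_cases hWb : W i b = 0
        · simp [hWb]
        · exfalso
          have : b ∈ S.filter fun j => W i j ≠ 0 := Finset.mem_filter.mpr ⟨hbS, hWb⟩
          rw [hj₀] at this
          exact hb (Finset.mem_singleton.mp this)
    rw [hsingle] at hsum0
    have : (c j₀ : ℝ) ≠ 0 := Int.cast_ne_zero.mpr hcj₀
    exact (mul_ne_zero hWij₀ this) hsum0
  refine ⟨key, fun x y hxy hx hy => ?_⟩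
  set c : Fin n → ℤ := fun j => x j - y j with hcdef
  have hcne : c ≠ 0 := by
    intro h
    apply hxy
    funext j
    have := congrFun h j
    simpa [hcdef, sub_eq_zero] using this
  have hWc : W.mulVec (fun j => (c j : ℝ)) = 0 := by
    have : (fun j => (c j : ℝ)) = (fun j => (x j : ℝ)) - (fun j => (y j : ℝ)) := by
      funext j; simp [hcdef]
    rw [this, Matrix.mulVec_sub, hx, hy, sub_zero]
  have hcards : (Finset.univ.filter fun j : Fin n => c j ≠ 0).card = hammingDist x y := by
    unfold hammingDist
    congr 1
    ext j
    simp [hcdef, sub_ne_zero]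
  have hgt : α * n < (hammingDist x y : ℝ) := by
    by_contra hle
    push_neg at hle
    refine key c hcne ?_ hWc
    rw [hcards]
    exact hle
  refine ⟨hgt, ?_⟩
  have : (⌊α * (n : ℝ)⌋ : ℤ) < (hammingDist x y : ℤ) := by
    refine Int.floor_lt.mpr ?_
    push_cast
    exact hgt
  omega
end

section
/- Consider a d_p-left-regular bipartite graph between n pattern nodes and m constraint nodes that is an (αn, βd_p)-expander, and suppose αn ≥ 3. Let i, j, ℓ be three distinct pattern nodes, let E = {i, j}, and let d' = |N(i) ∩ N(j)|. Then the number of constraint nodes that ℓ shares with the neighborhood of E satisfies |N(ℓ) ∩ N(E)| < 3 d_p (1 − β) − d'. -/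
/-- In a `d_p`-left-regular `(αn, βd_p)`-expander with `αn ≥ 3`, for three
distinct pattern nodes `i, j, ℓ` with `d' = |N(i) ∩ N(j)|`, the node `ℓ`
shares fewer than `3 d_p (1-β) - d'` constraint nodes with `N({i,j})`. -/
theorem expander_third_node_overlap_bound
    {n m : ℕ} (N : Fin n → Finset (Fin m)) (dp : ℕ) (α β : ℝ)
    (hreg : ∀ v, (N v).card = dp)
    (hexp : ∀ P : Finset (Fin n), P.Nonempty → (P.card : ℝ) ≤ α * n →
      β * (dp : ℝ) * (P.card : ℝ) < ((P.biUnion N).card : ℝ))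
    (hα : (3 : ℝ) ≤ α * n) :
    ∀ i j ℓ : Fin n, i ≠ j → ℓ ≠ i → ℓ ≠ j →
      ((N ℓ ∩ (N i ∪ N j)).card : ℝ)
        < 3 * (dp : ℝ) * (1 - β) - ((N i ∩ N j).card : ℝ) := by
  intro i j ℓ hij hli hlj
  have hcard : ({i, j, ℓ} : Finset (Fin n)).card = 3 := by
    rw [Finset.card_insert_of_notMem (by simp [hij, hli.symm]),
      Finset.card_insert_of_notMem (by simp [hlj.symm]), Finset.card_singleton]
  have key := hexp {i, j, ℓ} ⟨i, by simp⟩ (by rw [hcard]; exact_mod_cast hα)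
  rw [hcard] at key
  have hbu : ({i, j, ℓ} : Finset (Fin n)).biUnion N = N ℓ ∪ (N i ∪ N j) := by
    simp [Finset.biUnion_insert, Finset.union_comm, Finset.union_assoc,
      Finset.union_left_comm]
  rw [hbu] at key
  have h1 := Finset.card_union_add_card_inter (N ℓ) (N i ∪ N j)
  have h2 := Finset.card_union_add_card_inter (N i) (N j)
  have := hreg i; have := hreg j; have := hreg ℓ
  have h1' : ((N ℓ ∪ (N i ∪ N j)).card : ℝ) + ((N ℓ ∩ (N i ∪ N j)).card : ℝ)
      = (dp : ℝ) + ((N i ∪ N j).card : ℝ) := by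
    exact_mod_cast (by rw [h1, hreg ℓ] : (N ℓ ∪ (N i ∪ N j)).card + (N ℓ ∩ (N i ∪ N j)).card = dp + (N i ∪ N j).card)
  have h2' : ((N i ∪ N j).card : ℝ) + ((N i ∩ N j).card : ℝ) = (dp : ℝ) + (dp : ℝ) := by
    exact_mod_cast (by rw [h2, hreg i, hreg j] : (N i ∪ N j).card + (N i ∩ N j).card = dp + dp)
  push_cast at key
  nlinarith [key, h1', h2']
end

section
/- Consider a d_p-left-regular bipartite graph between n pattern nodes and m constraint nodes that is an (αn, βd_p)-expander with β ≥ 3/4 and αn ≥ 2. Then for any two distinct pattern nodes i and j, |N(i) ∩ N(j)| < d_p/2; consequently each of i and j has strictly more than half of its d_p constraint-node neighbors not shared with the other, i.e., |N(i) \ N(j)| > d_p/2 and |N(j) \ N(i)| > d_p/2. (This is the combinatorial fact guaranteeing that, when at most two pattern neurons are in error, the winner of the winner-take-all recall algorithm is updated toward reducing the noise, since the unique neighbors of each erroneous node agree on the direction of update.) -/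
/-- In a `d_p`-left-regular `(αn, βd_p)`-expander with `β ≥ 3/4` and
`αn ≥ 2`, any two distinct pattern nodes share fewer than `d_p/2` neighbors,
so each has strictly more than `d_p/2` unique neighbors. -/
theorem expander_majority_unique_neighbors
    {n m : ℕ} (N : Fin n → Finset (Fin m)) (dp : ℕ) (α β : ℝ)
    (hreg : ∀ v, (N v).card = dp)
    (hexp : ∀ P : Finset (Fin n), P.Nonempty → (P.card : ℝ) ≤ α * n →
      β * (dp : ℝ) * (P.card : ℝ) < ((P.biUnion N).card : ℝ))
    (hβ : (3 : ℝ) / 4 ≤ β) (hα : (2 : ℝ) ≤ α * n) :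
    ∀ i j : Fin n, i ≠ j →
      ((N i ∩ N j).card : ℝ) < (dp : ℝ) / 2
      ∧ (dp : ℝ) / 2 < ((N i \ N j).card : ℝ)
      ∧ (dp : ℝ) / 2 < ((N j \ N i).card : ℝ) := by
  intro i j hij
  have hcard : ({i, j} : Finset (Fin n)).card = 2 := Finset.card_pair hij
  have hbU : ({i, j} : Finset (Fin n)).biUnion N = N i ∪ N j := by
    simp [Finset.biUnion_insert]
  have hexp2 := hexp {i, j} ⟨i, by simp⟩ (by rw [hcard]; exact_mod_cast hα)
  rw [hbU, hcard] at hexp2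
  have hdp : (0 : ℝ) ≤ (dp : ℝ) := Nat.cast_nonneg _
  have hlow : (3 : ℝ) / 2 * dp < ((N i ∪ N j).card : ℝ) := by
    calc (3 : ℝ) / 2 * dp = (3 / 4) * dp * 2 := by ring
    _ ≤ β * dp * 2 := by nlinarith
    _ < _ := by exact_mod_cast hexp2
  have hU : ((N i ∪ N j).card : ℝ) + ((N i ∩ N j).card : ℝ) = 2 * dp := by
    have := Finset.card_union_add_card_inter (N i) (N j)
    rw [hreg i, hreg j] at this
    have := congrArg (Nat.cast (R := ℝ)) this
    push_cast at this
    linarith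
  have hinter : ((N i ∩ N j).card : ℝ) < (dp : ℝ) / 2 := by linarith
  have hsd : ∀ a b : Fin n, ((N a \ N b).card : ℝ) + ((N a ∩ N b).card : ℝ) = dp := by
    intro a b
    have := Finset.card_sdiff_add_card_inter (N a) (N b)
    rw [hreg a] at this
    exact_mod_cast this
  have h1 := hsd i j
  have h2 := hsd j i
  rw [Finset.inter_comm] at h2
  exact ⟨hinter, by linarith, by linarith⟩
end

section
/- Consider a d_p-left-regular bipartite graph between n pattern nodes and m constraint nodes that is an (αn, βd_p)-expander with β ≥ 4/5 and αn ≥ 3. Then for any two distinct pattern nodes i and j, |N(i) \ N(j)| > (3/5) d_p, while for every pattern node ℓ distinct from both i and j, |N(ℓ) ∩ N({i, j})| < (3/5) d_p. (These two inequalities are the combinatorial core of the guarantee that the Majority-Voting recall algorithm with threshold φ = 3/5 corrects any pattern of at most two erroneous pattern neurons: erroneous neurons receive feedback on more than a φ-fraction of their edges in the correct direction, while correct neurons receive feedback on fewer than a φ-fraction of their edges.) -/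
/-- Combinatorial core of the Majority-Voting guarantee: in a
`d_p`-left-regular `(αn, βd_p)`-expander with `β ≥ 4/5` and `αn ≥ 3`, for
distinct pattern nodes `i, j`, node `i` has more than `(3/5) d_p` neighbors
not shared with `j`, while any third node `ℓ` shares fewer than `(3/5) d_p`
neighbors with `N({i,j})`. -/
theorem expander_majority_voting_core
    {n m : ℕ} (N : Fin n → Finset (Fin m)) (dp : ℕ) (α β : ℝ)
    (hreg : ∀ v, (N v).card = dp)
    (hexp : ∀ P : Finset (Fin n), P.Nonempty → (P.card : ℝ) ≤ α * n →
      β * (dp : ℝ) * (P.card : ℝ) < ((P.biUnion N).card : ℝ))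
    (hβ : (4 : ℝ) / 5 ≤ β) (hα : (3 : ℝ) ≤ α * n) :
    ∀ i j : Fin n, i ≠ j →
      (3 / 5 * (dp : ℝ) < ((N i \ N j).card : ℝ))
      ∧ (∀ ℓ : Fin n, ℓ ≠ i → ℓ ≠ j →
          ((N ℓ ∩ (N i ∪ N j)).card : ℝ) < 3 / 5 * (dp : ℝ)) := by
  intro i j hij
  have hdp : (0 : ℝ) ≤ (dp : ℝ) := Nat.cast_nonneg dp
  have hcard2 : ({i, j} : Finset (Fin n)).card = 2 := by
    rw [Finset.card_insert_of_notMem (by simp [hij]), Finset.card_singleton]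
  have hb2 : ({i, j} : Finset (Fin n)).biUnion N = N i ∪ N j := by
    simp [Finset.biUnion_insert]
  have h2 := hexp {i, j} (by simp) (by rw [hcard2]; push_cast; linarith)
  rw [hb2, hcard2] at h2
  have hsd : ((N i \ N j).card : ℝ) + (dp : ℝ) = ((N i ∪ N j).card : ℝ) := by
    rw [← hreg j]; exact_mod_cast congrArg (Nat.cast (R := ℝ))
      (Finset.card_sdiff_add_card (s := N i) (t := N j))
  constructor
  · push_cast at h2
    nlinarith
  · intro ℓ hℓi hℓj
    have hcard3 : ({ℓ, i, j} : Finset (Fin n)).card = 3 := by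
      rw [Finset.card_insert_of_notMem (by simp [hℓi, hℓj]),
        Finset.card_insert_of_notMem (by simp [hij]), Finset.card_singleton]
    have hb3 : ({ℓ, i, j} : Finset (Fin n)).biUnion N = N ℓ ∪ (N i ∪ N j) := by
      simp [Finset.biUnion_insert]
    have h3 := hexp {ℓ, i, j} (by simp) (by rw [hcard3]; push_cast; linarith)
    rw [hb3, hcard3] at h3
    have hun : ((N ℓ ∪ (N i ∪ N j)).card : ℝ) + ((N ℓ ∩ (N i ∪ N j)).card : ℝ)
        = (dp : ℝ) + ((N i ∪ N j).card : ℝ) := by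
      rw [← hreg ℓ]; exact_mod_cast congrArg (Nat.cast (R := ℝ))
        (Finset.card_union_add_card_inter (N ℓ) (N i ∪ N j))
    have hub : ((N i ∪ N j).card : ℝ) ≤ 2 * (dp : ℝ) := by
      have := Finset.card_union_le (N i) (N j)
      rw [hreg i, hreg j] at this
      exact_mod_cast by linarith [this]
    push_cast at h3
    nlinarith
end
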